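/- arXiv:funct-an/9707009 — 4 statements merged into one kernel-verified Lean document; each statement's English description precedes it below -/
import Mathlib

section
/- Let α be a strongly continuous one-parameter isometric representation on a Banach space E and z ∈ ℂ. Then for every a ∈ D(α_z) and every y ∈ S(z), one has ‖α_y(a)‖ ≤ max{‖a‖, ‖α_z(a)‖}. -/
/-!
Translating along `ℝ`, the functions `ζ ↦ f (ζ + t)` and `ζ ↦ α t (f ζ)` agree on the real axis,
hence on the whole strip: a function continuous on a closed strip, holomorphic inside and
vanishing on the real edge vanishes identically, because its extension by zero across that edge is
holomorphic by Morera's theorem. So `‖f ζ‖ ≤ ‖f (ζ.im * I)‖`, `f` is bounded on the strip, and the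
Phragmén–Lindelöf principle reduces the estimate to the two edges, where `‖f‖` is at most `‖a‖`
and `‖f z‖` respectively.
-/

open Complex MeasureTheory Filter Topology Set

noncomputable section

/-- The closed horizontal strip between the real axis and the line `Im = z.im`. -/
def hStrip (z : ℂ) : Set ℂ := {y : ℂ | y.im ∈ Set.uIcc 0 z.im}

/-- A strongly continuous one-parameter (contractive, hence isometric) representation. -/
structure IsOneParamRep {E : Type*} [NormedAddCommGroup E] [NormedSpace ℂ E]
    (α : ℝ → E →L[ℂ] E) : Prop where
  map_add : ∀ s t : ℝ, α (s + t) = (α s).comp (α t)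
  map_zero : α 0 = ContinuousLinearMap.id ℂ E
  norm_le : ∀ t : ℝ, ‖α t‖ ≤ 1
  strong_cont : ∀ a : E, Continuous fun t : ℝ => α t a

/-- `(a, b)` lies in the graph of the analytic continuation `α_z`:  there is a function `f`,
continuous on the strip `S(z)`, analytic in its interior, agreeing with `t ↦ α_t a` on `ℝ`,
with `f z = b`. -/
def HasContVal {E : Type*} [NormedAddCommGroup E] [NormedSpace ℂ E]
    (α : ℝ → E →L[ℂ] E) (z : ℂ) (a b : E) : Prop :=
  ∃ f : ℂ → E, ContinuousOn f (hStrip z) ∧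
    DifferentiableOn ℂ f (interior (hStrip z)) ∧
    (∀ t : ℝ, f t = α t a) ∧ f z = b

section Strip

variable {E : Type*} [NormedAddCommGroup E] [NormedSpace ℂ E]

theorem integral_eq_integral_max_zero {φ : ℝ → E} (hφ : ∀ y ≤ 0, φ y = 0) (a b : ℝ) :
    ∫ y in a..b, φ y = ∫ y in max a 0..max b 0, φ y := by
  wlog hab : a ≤ b generalizing a b
  · rw [intervalIntegral.integral_symm, this b a (le_of_not_ge hab),
      intervalIntegral.integral_symm, neg_neg]
  rw [intervalIntegral.integral_of_le hab, intervalIntegral.integral_of_le (max_le_max hab le_rfl)]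
  refine setIntegral_eq_of_subset_of_forall_sdiff_eq_zero measurableSet_Ioc ?_ ?_
  · intro y ⟨hay, hyb⟩
    constructor <;> grind
  · intro y ⟨⟨hay, hyb⟩, hy⟩
    exact hφ y (by grind)

theorem isConservativeOn_of_eq_zero_of_im_nonpos {G : ℂ → E} {s : Set ℝ} (hs : s.OrdConnected)
    (hs0 : (0 : ℝ) ∈ s) (hG0 : ∀ ζ : ℂ, ζ.im ≤ 0 → G ζ = 0)
    (hc : ContinuousOn G (im ⁻¹' s)) (hd : DifferentiableOn ℂ G (im ⁻¹' (s ∩ Ioi 0))) :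
    IsConservativeOn G (im ⁻¹' s) := by
  intro z w hR
  -- Clipping `Im` at `0` changes no boundary integral, and the clipped rectangle lies in the
  -- closed upper half-plane, where Cauchy–Goursat applies.
  have hclip : ∀ x y : ℝ, G (x + y * I) = G (x + max y 0 * I) := by
    intro x y
    rcases le_total y 0 with hy | hy
    · rw [hG0 _ (by simpa using hy), hG0 _ (by simpa using hy)]
    · rw [max_eq_left hy]
  have hvert (r a b : ℝ) :
      ∫ y in a..b, G (r + y * I) = ∫ y in max a 0..max b 0, G (r + y * I) :=
    integral_eq_integral_max_zero (fun y hy ↦ hG0 _ (by simpa using hy)) a b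
  have hmax : ∀ ζ ∈ Rectangle z w, max ζ.im 0 ∈ s := fun ζ hζ ↦ by
    rcases max_choice ζ.im 0 with h | h <;> rw [h]
    exacts [hR hζ, hs0]
  have hsub : uIcc (max z.im 0) (max w.im 0) ⊆ s ∩ Ici 0 :=
    subset_inter (hs.uIcc_subset (hmax z ⟨left_mem_uIcc, left_mem_uIcc⟩)
      (hmax w ⟨right_mem_uIcc, right_mem_uIcc⟩))
      (ordConnected_Ici.uIcc_subset (le_max_right z.im 0) (le_max_right w.im 0))
  have key := integral_boundary_rect_eq_zero_of_continuousOn_of_differentiableOn G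
    ⟨z.re, max z.im 0⟩ ⟨w.re, max w.im 0⟩
    (hc.mono fun ζ hζ ↦ (hsub hζ.2).1)
    (hd.mono fun ζ hζ ↦ ⟨(hsub (Ioo_subset_Icc_self hζ.2)).1,
      (le_min (le_max_right _ _) (le_max_right _ _)).trans_lt hζ.2.1⟩)
  rw [← add_eq_zero_iff_eq_neg, wedgeIntegral_add_wedgeIntegral_eq]
  simp only [hclip _ z.im, hclip _ w.im]
  rw [hvert w.re, hvert z.re]
  exact key

theorem eqOn_zero_strip_of_eq_zero_on_real [CompleteSpace E] {g : ℂ → E} {b : ℝ} (hb : 0 < b)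
    (hc : ContinuousOn g (im ⁻¹' Icc 0 b)) (hd : DifferentiableOn ℂ g (im ⁻¹' Ioo 0 b))
    (h0 : ∀ t : ℝ, g t = 0) : EqOn g 0 (im ⁻¹' Icc 0 b) := by
  set U : Set ℂ := im ⁻¹' Iio b
  have hU : IsOpen U := isOpen_Iio.preimage continuous_im
  -- `G` is `g` on the upper half-plane, extended by zero below the real axis.
  set G : ℂ → E := fun ζ ↦ g (ζ.re + max ζ.im 0 * I)
  have hGg : ∀ ζ : ℂ, 0 ≤ ζ.im → G ζ = g ζ := fun ζ hζ ↦ by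
    simp [G, max_eq_left hζ, re_add_im]
  have hG0 : ∀ ζ : ℂ, ζ.im ≤ 0 → G ζ = 0 := fun ζ hζ ↦ by
    simp [G, max_eq_right hζ, h0]
  have hGc : ContinuousOn G U :=
    hc.comp (by fun_prop) fun ζ (hζ : ζ.im < b) ↦ by
      simpa using max_le hζ.le hb.le
  have hGd : DifferentiableOn ℂ G U := by
    refine (isConservativeOn_and_continuousOn_iff_isDifferentiableOn hU).mp ⟨?_, hGc⟩
    refine isConservativeOn_of_eq_zero_of_im_nonpos ordConnected_Iio hb hG0 hGc ?_
    rw [Iio_inter_Ioi]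
    exact hd.congr fun ζ hζ ↦ hGg ζ hζ.1.le
  have hGU : EqOn G 0 U := by
    have hI : (-I).im < 0 := by simp
    refine (hGd.analyticOnNhd hU).eqOn_zero_of_preconnected_of_eventuallyEq_zero
      ((convex_Iio b).linear_preimage imLm).isPreconnected (hI.trans hb) ?_
    filter_upwards [(isOpen_Iio.preimage continuous_im).mem_nhds hI] with ζ hζ using hG0 ζ hζ.le
  have hg : EqOn g 0 (im ⁻¹' Ico 0 b) := fun ζ hζ ↦ by
    rw [← hGg ζ hζ.1]
    exact hGU hζ.2
  refine hg.of_subset_closure hc continuousOn_const (preimage_mono Ico_subset_Icc_self) ?_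
  rw [closure_preimage_im, closure_Ico hb.ne]

theorem isClosed_hStrip (z : ℂ) : IsClosed (hStrip z) :=
  isClosed_Icc.preimage continuous_im

theorem interior_hStrip (z : ℂ) :
    interior (hStrip z) = im ⁻¹' Ioo (min 0 z.im) (max 0 z.im) := by
  change interior (im ⁻¹' uIcc 0 z.im) = _
  rw [interior_preimage_im, uIcc, interior_Icc]

theorem eqOn_zero_hStrip_of_eq_zero_on_real [CompleteSpace E] {z : ℂ} {g : ℂ → E}
    (hc : ContinuousOn g (hStrip z)) (hd : DifferentiableOn ℂ g (interior (hStrip z)))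
    (h0 : ∀ t : ℝ, g t = 0) : EqOn g 0 (hStrip z) := by
  rw [interior_hStrip] at hd
  rcases lt_trichotomy z.im 0 with hneg | hzero | hpos
  · have hS : hStrip z = Neg.neg ⁻¹' (im ⁻¹' Icc 0 (-z.im)) := by
      ext w
      simp [hStrip, uIcc_of_ge hneg.le, and_comm]
    have hc' : ContinuousOn (fun ζ ↦ g (-ζ)) (im ⁻¹' Icc 0 (-z.im)) :=
      hc.comp (by fun_prop) (hS ▸ fun ζ hζ ↦ by simpa using hζ)
    have hd' : DifferentiableOn ℂ (fun ζ ↦ g (-ζ)) (im ⁻¹' Ioo 0 (-z.im)) := by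
      rw [min_eq_right hneg.le, max_eq_left hneg.le] at hd
      refine hd.comp (by fun_prop) fun ζ hζ ↦ ?_
      simp only [mem_preimage, mem_Ioo, neg_im] at hζ ⊢
      constructor <;> linarith [hζ.1, hζ.2]
    intro w hw
    rw [hS] at hw
    simpa using eqOn_zero_strip_of_eq_zero_on_real (neg_pos.2 hneg) hc' hd'
      (fun t ↦ by simpa using h0 (-t)) hw
  · intro w hw
    have hw0 : w.im = 0 := by simpa [hStrip, hzero] using hw
    rw [show w = w.re from Complex.ext (by simp) (by simp [hw0])]
    exact h0 w.re
  · rw [min_eq_left hpos.le, max_eq_right hpos.le] at hd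
    have hS : hStrip z = im ⁻¹' Icc 0 z.im := by
      change im ⁻¹' uIcc 0 z.im = _
      rw [uIcc_of_le hpos.le]
    rw [hS] at hc ⊢
    exact eqOn_zero_strip_of_eq_zero_on_real hpos hc hd h0

theorem IsOneParamRep.norm_apply_le {α : ℝ → E →L[ℂ] E} (hα : IsOneParamRep α) (t : ℝ)
    (x : E) : ‖α t x‖ ≤ ‖x‖ := by
  simpa using (α t).le_of_opNorm_le (hα.norm_le t) x

theorem IsOneParamRep.continuation_add_ofReal [CompleteSpace E] {α : ℝ → E →L[ℂ] E}
    (hα : IsOneParamRep α) {z : ℂ} {a : E} {f : ℂ → E} (hf1 : ContinuousOn f (hStrip z))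
    (hf2 : DifferentiableOn ℂ f (interior (hStrip z))) (hf3 : ∀ t : ℝ, f t = α t a)
    {w : ℂ} (hw : w ∈ hStrip z) (t : ℝ) : f (w + t) = α t (f w) := by
  have hmaps : ∀ s, MapsTo (· + (t : ℂ)) (im ⁻¹' s) (im ⁻¹' s) := fun s ζ hζ ↦ by
    simpa using hζ
  refine sub_eq_zero.mp <| eqOn_zero_hStrip_of_eq_zero_on_real
    (g := fun ζ ↦ f (ζ + t) - α t (f ζ)) ?_ ?_ (fun s ↦ ?_) hw
  · exact (hf1.comp (by fun_prop) (hmaps _)).sub ((α t).continuous.comp_continuousOn hf1)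
  · rw [interior_hStrip] at hf2 ⊢
    exact (hf2.comp (by fun_prop) (hmaps _)).sub ((α t).differentiable.comp_differentiableOn hf2)
  · simp only [← ofReal_add, hf3, add_comm s t, hα.map_add, ContinuousLinearMap.comp_apply,
      sub_self]

theorem IsOneParamRep.norm_continuation_le_of_im_eq [CompleteSpace E] {α : ℝ → E →L[ℂ] E}
    (hα : IsOneParamRep α) {z : ℂ} {a : E} {f : ℂ → E} (hf1 : ContinuousOn f (hStrip z))
    (hf2 : DifferentiableOn ℂ f (interior (hStrip z))) (hf3 : ∀ t : ℝ, f t = α t a)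
    {w w' : ℂ} (hw' : w' ∈ hStrip z) (h : w.im = w'.im) : ‖f w‖ ≤ ‖f w'‖ := by
  have hw : w = w' + ↑(w.re - w'.re) := Complex.ext (by simp) (by simp [h])
  rw [hw, hα.continuation_add_ofReal hf1 hf2 hf3 hw']
  exact hα.norm_apply_le _ _

theorem IsOneParamRep.exists_norm_continuation_le [CompleteSpace E] {α : ℝ → E →L[ℂ] E}
    (hα : IsOneParamRep α) {z : ℂ} {a : E} {f : ℂ → E} (hf1 : ContinuousOn f (hStrip z))
    (hf2 : DifferentiableOn ℂ f (interior (hStrip z))) (hf3 : ∀ t : ℝ, f t = α t a) :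
    ∃ C, ∀ w ∈ hStrip z, ‖f w‖ ≤ C := by
  have hK : IsCompact ((fun r : ℝ ↦ (r : ℂ) * I) '' uIcc 0 z.im) :=
    isCompact_uIcc.image (by fun_prop)
  obtain ⟨C, hC⟩ := hK.exists_bound_of_continuousOn
    (hf1.mono (image_subset_iff.2 fun r hr ↦ by simpa [hStrip] using hr))
  refine ⟨C, fun w hw ↦ le_trans ?_ (hC _ ⟨w.im, hw, rfl⟩)⟩
  exact hα.norm_continuation_le_of_im_eq hf1 hf2 hf3 (by simpa [hStrip] using hw) (by simp)

end Strip

/-- Phragmén–Lindelöf bound: for `a ∈ D(α_z)` and `y ∈ S(z)`,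
`‖α_y a‖ ≤ max ‖a‖ ‖α_z a‖` (here `f` is the analytic extension, so `f y = α_y a` and
`f z = α_z a`). -/
theorem cont_norm_bound
    {E : Type*} [NormedAddCommGroup E] [NormedSpace ℂ E] [CompleteSpace E]
    {α : ℝ → E →L[ℂ] E} (hα : IsOneParamRep α) (z : ℂ) (a : E) (f : ℂ → E)
    (hf1 : ContinuousOn f (hStrip z))
    (hf2 : DifferentiableOn ℂ f (interior (hStrip z)))
    (hf3 : ∀ t : ℝ, f t = α t a) :
    ∀ y ∈ hStrip z, ‖f y‖ ≤ max ‖a‖ ‖f z‖ := by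
  intro y hy
  obtain ⟨C, hC⟩ := hα.exists_norm_continuation_le hf1 hf2 hf3
  have hedge : ∀ w : ℂ, w.im = 0 ∨ w.im = z.im → ‖f w‖ ≤ max ‖a‖ ‖f z‖ := by
    rintro w (hw | hw)
    · refine le_max_of_le_left ((hα.norm_continuation_le_of_im_eq hf1 hf2 hf3
        (w' := ((0 : ℝ) : ℂ)) (by simp [hStrip]) (by simpa using hw)).trans_eq ?_)
      rw [hf3, hα.map_zero, ContinuousLinearMap.id_apply]
    · exact le_max_of_le_right (hα.norm_continuation_le_of_im_eq hf1 hf2 hf3 right_mem_uIcc hw)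
  have hint : im ⁻¹' Ioo (min 0 z.im) (max 0 z.im) ⊆ hStrip z :=
    interior_hStrip z ▸ interior_subset
  refine PhragmenLindelof.horizontal_strip
    ⟨hf2.mono (interior_hStrip z).ge, hf1.mono (closure_minimal hint (isClosed_hStrip z))⟩
    ⟨-1, ?_, 0, ?_⟩ (fun w hw ↦ hedge w (hw ▸ min_choice 0 z.im))
    (fun w hw ↦ hedge w (hw ▸ max_choice 0 z.im)) hy.1 hy.2
  · have := div_nonneg Real.pi_pos.le (sub_nonneg.2 (min_le_max : min 0 z.im ≤ max 0 z.im))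
    linarith
  · refine Asymptotics.IsBigO.of_bound C (eventually_inf_principal.2 (Eventually.of_forall ?_))
    intro w hw
    simpa using hC w (hint hw)
end
end

section
/- Let α be a strongly continuous one-parameter isometric representation on a Banach space E, and y, z ∈ ℂ arbitrary. Then α_y α_z ⊆ α_{y+z}; moreover D(α_y α_z) = D(α_z) ∩ D(α_{y+z}) and Ran(α_y α_z) = Ran(α_y) ∩ Ran(α_{y+z}). -/
open Complex MeasureTheory Filter Topology Set

noncomputable section

/-!
Both inclusions rest on two facts about a function continuous on a closed horizontal strip and
holomorphic inside. First, two such functions on adjacent strips that agree on the common line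
glue to one (Morera's theorem on rectangles cut by the line). Second, such a function is
determined by its values on one boundary line: glued with `0` across that line it vanishes on an
open set, hence everywhere by the identity theorem. Uniqueness makes any continuation `f` of
`t ↦ α_t a` covariant, `f (w + t) = α_t (f w)`. So if `f` continues `a` to `S(z)` with
`f z = b` and `g` continues `b` to `S(y)` with `g y = c`, then `f` and `g (· - z)` agree on the
line `im = z.im`; gluing them, or comparing them where the strips overlap, continues `a` to
`S(y + z)` with value `c`. This is `α_y α_z ⊆ α_{y+z}`. As `w ↦ f (w + z)` shows
`α_z⁻¹ ⊆ α_{-z}`, the domain and range identities follow from this inclusion applied to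
`α_{y+z} α_{-z}` and `α_{-y} α_{y+z}`.
-/

open scoped Interval

theorem Set.mem_uIcc_or_mem_uIcc_or_mem_uIcc {α : Type*} [LinearOrder α] (p q r : α) :
    q ∈ [[p, r]] ∨ r ∈ [[p, q]] ∨ p ∈ [[q, r]] := by
  simp only [mem_uIcc]
  rcases le_total p q with h₁ | h₁ <;> rcases le_total q r with h₂ | h₂ <;> grind

theorem Set.uIcc_inter_uIcc_subset_singleton {α : Type*} [LinearOrder α] {p q r : α}
    (h : q ∈ [[p, r]]) : [[p, q]] ∩ [[q, r]] ⊆ {q} := by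
  intro x ⟨hx₁, hx₂⟩
  simp only [mem_uIcc, mem_singleton_iff] at h hx₁ hx₂ ⊢
  rcases h with h | h <;> rcases hx₁ with hx₁ | hx₁ <;> rcases hx₂ with hx₂ | hx₂ <;> order

theorem apply_eq_of_im_eq_zero {X : Type*} {f : ℂ → X} {φ : ℝ → X} (h : ∀ t : ℝ, f t = φ t)
    {w : ℂ} (hw : w.im = 0) : f w = φ w.re :=
  (congrArg f (Complex.ext (by simp) (by simp [hw]) : (w.re : ℂ) = w)).symm.trans (h w.re)

section

variable {E : Type*} [NormedAddCommGroup E] [NormedSpace ℂ E]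

namespace Complex

theorem integral_boundary_rect_eq_zero_of_differentiableAt_off_line (f : ℂ → E) (z w : ℂ)
    (q : ℝ) (hc : ContinuousOn f ([[z.re, w.re]] ×ℂ [[z.im, w.im]]))
    (hd : ∀ u ∈ [[z.re, w.re]] ×ℂ [[z.im, w.im]], u.im ≠ q → DifferentiableAt ℂ f u) :
    (∫ x : ℝ in z.re..w.re, f (x + z.im * I)) - (∫ x : ℝ in z.re..w.re, f (x + w.im * I)) +
      I • (∫ y : ℝ in z.im..w.im, f (w.re + y * I)) -
      I • (∫ y : ℝ in z.im..w.im, f (z.re + y * I)) = 0 := by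
  have h_avoid : ∀ z' w' : ℂ, z'.re = z.re → w'.re = w.re →
      [[z'.im, w'.im]] ⊆ [[z.im, w.im]] → q ∉ uIoo z'.im w'.im →
      (∫ x : ℝ in z.re..w.re, f (x + z'.im * I)) -
        (∫ x : ℝ in z.re..w.re, f (x + w'.im * I)) +
        I • (∫ y : ℝ in z'.im..w'.im, f (w.re + y * I)) -
        I • (∫ y : ℝ in z'.im..w'.im, f (z.re + y * I)) = 0 := by
    intro z' w' hz' hw' hsub hq
    have hrect : [[z'.re, w'.re]] ×ℂ [[z'.im, w'.im]] ⊆ [[z.re, w.re]] ×ℂ [[z.im, w.im]] := by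
      rw [hz', hw']; exact reProdIm_subset_iff.2 (prod_mono subset_rfl hsub)
    have := integral_boundary_rect_eq_zero_of_continuousOn_of_differentiableOn f z' w'
      (hc.mono hrect) fun u hu => (hd u (hrect ⟨Ioo_subset_Icc_self hu.1,
        Ioo_subset_Icc_self hu.2⟩) (ne_of_mem_of_not_mem hu.2 hq)).differentiableWithinAt
    rwa [hz', hw'] at this
  by_cases hq : q ∈ uIoo z.im w.im
  -- Cut the rectangle along the line; the two integrals along the cut cancel.
  · have hq' : q ∈ [[z.im, w.im]] := uIoo_subset_uIcc_self hq
    have h_lower := h_avoid z (w.re + q * I) rfl (by simp)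
      (by simpa using uIcc_subset_uIcc_left hq') (by simp)
    have h_upper := h_avoid (z.re + q * I) w (by simp) rfl
      (by simpa using uIcc_subset_uIcc_right hq') (by simp)
    simp only [ofReal_re, I_re, mul_zero, ofReal_im, I_im, mul_one, add_zero, add_im, mul_im,
      zero_add] at h_lower h_upper
    have h_vert : ∀ x ∈ [[z.re, w.re]], (∫ y : ℝ in z.im..q, f (x + y * I)) +
        (∫ y : ℝ in q..w.im, f (x + y * I)) = ∫ y : ℝ in z.im..w.im, f (x + y * I) := by
      intro x hx
      have h_int : IntervalIntegrable (fun y : ℝ => f (x + y * I)) volume z.im w.im :=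
        (hc.comp (by fun_prop : Continuous fun y : ℝ => (x + y * I : ℂ)).continuousOn
          fun y hy => by simpa [mem_reProdIm] using ⟨hx, hy⟩).intervalIntegrable
      exact intervalIntegral.integral_add_adjacent_intervals
        (h_int.mono_set (uIcc_subset_uIcc_left hq')) (h_int.mono_set (uIcc_subset_uIcc_right hq'))
    rw [← h_vert _ right_mem_uIcc, ← h_vert _ left_mem_uIcc]
    linear_combination (norm := module) h_lower + h_upper
  · exact h_avoid z w rfl rfl subset_rfl hq

theorem differentiableOn_of_differentiableAt_off_line [CompleteSpace E] {f : ℂ → E} {U : Set ℂ}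
    (hU : IsOpen U) (q : ℝ) (hc : ContinuousOn f U)
    (hd : ∀ w ∈ U, w.im ≠ q → DifferentiableAt ℂ f w) : DifferentiableOn ℂ f U := by
  refine (isConservativeOn_and_continuousOn_iff_isDifferentiableOn hU).1 ⟨fun z w hzw => ?_, hc⟩
  rw [← add_eq_zero_iff_eq_neg, wedgeIntegral_add_wedgeIntegral_eq]
  exact integral_boundary_rect_eq_zero_of_differentiableAt_off_line f z w q (hc.mono hzw)
    fun u hu => hd u (hzw hu)

end Complex

/-- Unlike `DiffContOnCl ℂ f (im ⁻¹' uIoo p q)`, this keeps continuity on the line when `p = q`. -/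
structure IsHolomorphicOnStrip (f : ℂ → E) (p q : ℝ) : Prop where
  continuousOn : ContinuousOn f (im ⁻¹' [[p, q]])
  differentiableOn : DifferentiableOn ℂ f (interior (im ⁻¹' [[p, q]]))

theorem isHolomorphicOnStrip_const (c : E) (p q : ℝ) : IsHolomorphicOnStrip (fun _ => c) p q :=
  ⟨continuousOn_const, differentiableOn_const c⟩

namespace IsHolomorphicOnStrip

variable {f g : ℂ → E} {p q r : ℝ}

theorem symm (hf : IsHolomorphicOnStrip f p q) : IsHolomorphicOnStrip f q p where
  continuousOn := uIcc_comm p q ▸ hf.continuousOn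
  differentiableOn := uIcc_comm p q ▸ hf.differentiableOn

theorem mono (hf : IsHolomorphicOnStrip f p q) {p' q' : ℝ} (h : [[p', q']] ⊆ [[p, q]]) :
    IsHolomorphicOnStrip f p' q' where
  continuousOn := hf.continuousOn.mono (preimage_mono h)
  differentiableOn := hf.differentiableOn.mono (interior_mono (preimage_mono h))

theorem sub (hf : IsHolomorphicOnStrip f p q) (hg : IsHolomorphicOnStrip g p q) :
    IsHolomorphicOnStrip (f - g) p q :=
  ⟨hf.continuousOn.sub hg.continuousOn, hf.differentiableOn.sub hg.differentiableOn⟩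

theorem continuousLinearMap_comp {F : Type*} [NormedAddCommGroup F] [NormedSpace ℂ F]
    (hf : IsHolomorphicOnStrip f p q) (L : E →L[ℂ] F) :
    IsHolomorphicOnStrip (fun w => L (f w)) p q :=
  ⟨L.continuous.comp_continuousOn hf.continuousOn,
    L.differentiable.comp_differentiableOn hf.differentiableOn⟩

theorem comp_add_const (hf : IsHolomorphicOnStrip f p q) (c : ℂ) {p' q' : ℝ}
    (hp : p' + c.im = p) (hq : q' + c.im = q) :
    IsHolomorphicOnStrip (fun w => f (w + c)) p' q' := by
  have hpre : (· + c) ⁻¹' (im ⁻¹' [[p, q]]) = im ⁻¹' [[p', q']] := by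
    ext w
    subst hp hq
    simp [mem_uIcc]
  refine ⟨hf.continuousOn.comp (continuous_add_const c).continuousOn ?_,
    hf.differentiableOn.comp (differentiableOn_id.add_const c) ?_⟩
  · rw [← hpre]
    exact mapsTo_preimage _ _
  · rw [← hpre]
    exact (isOpenMap_add_right c).mapsTo_interior (mapsTo_preimage _ _)

theorem exists_glue [CompleteSpace E] (hq : q ∈ [[p, r]]) (hf : IsHolomorphicOnStrip f p q)
    (hg : IsHolomorphicOnStrip g q r) (hfg : EqOn f g (im ⁻¹' {q})) :
    ∃ F, IsHolomorphicOnStrip F p r ∧ EqOn F f (im ⁻¹' [[p, q]]) ∧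
      EqOn F g (im ⁻¹' [[q, r]]) := by
  classical
  set S := im ⁻¹' [[p, q]]
  set T := im ⁻¹' [[q, r]]
  set F := S.piecewise f g
  have hST : S ∩ T ⊆ im ⁻¹' {q} := fun w hw => uIcc_inter_uIcc_subset_singleton hq hw
  have hFf : EqOn F f S := piecewise_eqOn _ _ _
  have hFg : EqOn F g T := fun w hwT => by
    by_cases hwS : w ∈ S
    · rw [hFf hwS]
      exact hfg (hST ⟨hwS, hwT⟩)
    · exact piecewise_eq_of_notMem _ _ _ hwS
  have hS : IsClosed S := isClosed_Icc.preimage continuous_im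
  have hT : IsClosed T := isClosed_Icc.preimage continuous_im
  have hST_cover : im ⁻¹' [[p, r]] ⊆ S ∪ T := preimage_mono uIcc_subset_uIcc_union_uIcc
  have hcont : ContinuousOn F (im ⁻¹' [[p, r]]) :=
    ((hf.continuousOn.congr hFf).union_of_isClosed (hg.continuousOn.congr hFg) hS hT).mono
      hST_cover
  have hlocal : ∀ {φ : ℂ → E} {A B : Set ℂ}, DifferentiableOn ℂ φ (interior A) → EqOn F φ A →
      IsClosed B → im ⁻¹' [[p, r]] ⊆ A ∪ B →
      ∀ w ∈ interior (im ⁻¹' [[p, r]]), w ∉ B → DifferentiableAt ℂ F w := by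
    intro φ A B hφ hFφ hB hAB w hw hwB
    have hV : IsOpen (interior (im ⁻¹' [[p, r]]) ∩ Bᶜ) := isOpen_interior.inter hB.isOpen_compl
    have hVA : interior (im ⁻¹' [[p, r]]) ∩ Bᶜ ⊆ A := fun v ⟨hv, hvB⟩ =>
      (hAB (interior_subset hv)).resolve_right hvB
    exact ((hφ.mono (interior_maximal hVA hV)).congr (hFφ.mono hVA)).differentiableAt
      (hV.mem_nhds ⟨hw, hwB⟩)
  refine ⟨F, ⟨hcont, Complex.differentiableOn_of_differentiableAt_off_line isOpen_interior q
    (hcont.mono interior_subset) fun w hw hwq => ?_⟩, hFf, hFg⟩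
  by_cases hwT : w ∈ T
  · exact hlocal hg.differentiableOn hFg hS (union_comm S T ▸ hST_cover) w hw
      fun hwS => hwq (hST ⟨hwS, hwT⟩)
  · exact hlocal hf.differentiableOn hFf hT hST_cover w hw hwT

theorem eqOn_zero_of_eventuallyEq_zero [CompleteSpace E] (hf : IsHolomorphicOnStrip f p q)
    (hpq : p ≠ q) {z₀ : ℂ} (hz₀ : z₀ ∈ interior (im ⁻¹' [[p, q]])) (h₀ : f =ᶠ[𝓝 z₀] 0) :
    EqOn f 0 (im ⁻¹' [[p, q]]) := by
  have hU : EqOn f 0 (interior (im ⁻¹' [[p, q]])) :=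
    AnalyticOnNhd.eqOn_zero_of_preconnected_of_eventuallyEq_zero
      (hf.differentiableOn.analyticOnNhd isOpen_interior)
      ((convex_uIcc p q).linear_preimage imLm).interior.isPreconnected hz₀ h₀
  refine hU.of_subset_closure hf.continuousOn continuousOn_const interior_subset ?_
  rw [interior_preimage_im, closure_preimage_im, show interior [[p, q]] = uIoo p q from
    interior_Icc, closure_uIoo hpq]

theorem eqOn_of_eqOn_line [CompleteSpace E] (hf : IsHolomorphicOnStrip f p q)
    (hg : IsHolomorphicOnStrip g p q) (hfg : EqOn f g (im ⁻¹' {p})) :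
    EqOn f g (im ⁻¹' [[p, q]]) := by
  rcases eq_or_ne p q with rfl | hpq
  · simpa using hfg
  -- Glue `f - g` to zero on the mirror image of the strip across the line `im = p`.
  have hp : p ∈ [[2 * p - q, q]] := by
    simp only [mem_uIcc]
    grind
  obtain ⟨F, hF, hF0, hFfg⟩ := (isHolomorphicOnStrip_const (0 : E) (2 * p - q) p).exists_glue hp
    (hf.sub hg) fun w hw => (sub_eq_zero.2 (hfg hw)).symm
  obtain ⟨x, hx⟩ := nonempty_uIoo.2 (show 2 * p - q ≠ p by grind)
  have hx : (x * I : ℂ) ∈ interior (im ⁻¹' [[2 * p - q, p]]) := by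
    rw [interior_preimage_im, show interior [[2 * p - q, p]] = uIoo (2 * p - q) p from
      interior_Icc]
    simpa using hx
  have hF_zero := hF.eqOn_zero_of_eventuallyEq_zero (by grind)
    (interior_mono (preimage_mono (uIcc_subset_uIcc_left hp)) hx)
    (eventually_of_mem (isOpen_interior.mem_nhds hx) fun w hw => hF0 (interior_subset hw))
  intro w hw
  have := hF_zero (preimage_mono (uIcc_subset_uIcc_right hp) hw)
  rw [hFfg hw] at this
  exact sub_eq_zero.1 this

theorem exists_of_eqOn_line [CompleteSpace E] (hf : IsHolomorphicOnStrip f p q)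
    (hg : IsHolomorphicOnStrip g q r) (hfg : EqOn f g (im ⁻¹' {q})) :
    ∃ F, IsHolomorphicOnStrip F p r ∧ EqOn F f (im ⁻¹' {p}) ∧ EqOn F g (im ⁻¹' {r}) := by
  rcases mem_uIcc_or_mem_uIcc_or_mem_uIcc p q r with hq | hr | hp
  · obtain ⟨F, hF, hFf, hFg⟩ := hf.exists_glue hq hg hfg
    exact ⟨F, hF, hFf.mono (preimage_mono (by simp)), hFg.mono (preimage_mono (by simp))⟩
  · refine ⟨f, hf.mono (uIcc_subset_uIcc_left hr), eqOn_refl _ _, ?_⟩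
    exact ((hf.symm.mono (uIcc_subset_uIcc_left (uIcc_comm p q ▸ hr))).eqOn_of_eqOn_line hg
      hfg).mono (preimage_mono (by simp))
  · refine ⟨g, hg.mono (uIcc_subset_uIcc_right hp), ?_, eqOn_refl _ _⟩
    exact ((hf.symm.eqOn_of_eqOn_line (hg.mono (uIcc_subset_uIcc_left hp)) hfg).mono
      (preimage_mono (by simp))).symm

end IsHolomorphicOnStrip

variable {α : ℝ → E →L[ℂ] E}

theorem hasContVal_iff {z : ℂ} {a b : E} :
    HasContVal α z a b ↔
      ∃ f, IsHolomorphicOnStrip f 0 z.im ∧ (∀ t : ℝ, f t = α t a) ∧ f z = b :=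
  ⟨fun ⟨f, hc, hd, hfa, hfz⟩ => ⟨f, ⟨hc, hd⟩, hfa, hfz⟩,
    fun ⟨f, ⟨hc, hd⟩, hfa, hfz⟩ => ⟨f, hc, hd, hfa, hfz⟩⟩

variable [CompleteSpace E]

theorem IsOneParamRep.apply_eq_of_im_eq (hα : IsOneParamRep α) {f : ℂ → E} {h : ℝ} {a : E}
    (hf : IsHolomorphicOnStrip f 0 h) (hfa : ∀ t : ℝ, f t = α t a) {v w : ℂ}
    (hv : v.im ∈ [[0, h]]) (hw : w.im = v.im) : f w = α (w - v).re (f v) := by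
  set t := (w - v).re
  have h_shift : EqOn (fun u => f (u + t)) (fun u => α t (f u)) (im ⁻¹' [[0, h]]) :=
    (hf.comp_add_const t (by simp) (by simp)).eqOn_of_eqOn_line
      (hf.continuousLinearMap_comp (α t)) fun u (hu : u.im = 0) => by
        dsimp only
        rw [apply_eq_of_im_eq_zero hfa hu, apply_eq_of_im_eq_zero hfa (by simpa using hu),
          add_re, ofReal_re, add_comm, hα.map_add]
        rfl
  have hwv : w = v + t := Complex.ext (by simp [t]) (by simp [hw])
  rw [hwv]
  exact h_shift hv

namespace HasContVal

variable {y z : ℂ} {a b c : E}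

theorem neg (hα : IsOneParamRep α) (h : HasContVal α z a b) : HasContVal α (-z) b a := by
  obtain ⟨f, hf, hfa, rfl⟩ := hasContVal_iff.1 h
  refine hasContVal_iff.2 ⟨fun w => f (w + z), (hf.comp_add_const z (by simp) (by simp)).symm,
    fun t => ?_, ?_⟩
  · simpa using hα.apply_eq_of_im_eq hf hfa right_mem_uIcc (w := t + z) (by simp)
  · simpa [hα.map_zero] using apply_eq_of_im_eq_zero hfa (w := -z + z) (by simp)

theorem comp (hα : IsOneParamRep α) (hy : HasContVal α y b c) (hz : HasContVal α z a b) :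
    HasContVal α (y + z) a c := by
  obtain ⟨f, hf, hfa, rfl⟩ := hasContVal_iff.1 hz
  obtain ⟨g, hg, hgb, rfl⟩ := hasContVal_iff.1 hy
  have hG := hg.comp_add_const (-z) (p' := z.im) (q' := (y + z).im) (by simp) (by simp)
  obtain ⟨F, hF, hFf, hFG⟩ := hf.exists_of_eqOn_line hG fun w (hw : w.im = z.im) => by
    rw [hα.apply_eq_of_im_eq hf hfa right_mem_uIcc hw,
      apply_eq_of_im_eq_zero hgb (by simp [hw]), sub_eq_add_neg]
  refine hasContVal_iff.2 ⟨F, hF, fun t => (hFf (by simp)).trans (hfa t), ?_⟩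
  rw [hFG (x := y + z) rfl]
  simp

end HasContVal

end

/-- For arbitrary `y, z ∈ ℂ` one has `α_y α_z ⊆ α_{y+z}`, with
`D(α_y α_z) = D(α_z) ∩ D(α_{y+z})` and `Ran (α_y α_z) = Ran α_y ∩ Ran α_{y+z}`. -/
theorem cont_comp_subset
    {E : Type*} [NormedAddCommGroup E] [NormedSpace ℂ E] [CompleteSpace E]
    {α : ℝ → E →L[ℂ] E} (hα : IsOneParamRep α) (y z : ℂ) :
    (∀ a b c : E, HasContVal α z a b → HasContVal α y b c →
        HasContVal α (y + z) a c) ∧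
    {a : E | ∃ b c, HasContVal α z a b ∧ HasContVal α y b c}
      = {a : E | ∃ b, HasContVal α z a b} ∩ {a : E | ∃ c, HasContVal α (y + z) a c} ∧
    {c : E | ∃ a b, HasContVal α z a b ∧ HasContVal α y b c}
      = {c : E | ∃ b, HasContVal α y b c} ∩ {c : E | ∃ a, HasContVal α (y + z) a c} := by
  refine ⟨fun a b c hz hy => hy.comp hα hz, ?_, ?_⟩
  · ext a
    refine ⟨fun ⟨b, c, hz, hy⟩ => ⟨⟨b, hz⟩, c, hy.comp hα hz⟩,
      fun ⟨⟨b, hz⟩, c, hyz⟩ => ⟨b, c, hz, ?_⟩⟩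
    simpa using hyz.comp hα (hz.neg hα)
  · ext c
    refine ⟨fun ⟨a, b, hz, hy⟩ => ⟨⟨b, hy⟩, a, hy.comp hα hz⟩,
      fun ⟨⟨b, hy⟩, a, hyz⟩ => ⟨a, b, ?_, hy⟩⟩
    simpa using (hy.neg hα).comp hα hyz
end
end

section
/- Let α be a strongly continuous one-parameter isometric representation on a Banach space E. For a ∈ E, r > 0, z ∈ ℂ define the smeared element a(r,z) = (r/√π) ∫_ℝ exp(-r²(t-z)²) α_t(a) dt. Then a(r,z) belongs to D(α_y) for every y ∈ ℂ (it is entire analytic for α), and α_y(a(r,z)) = a(r, z+y) for every y ∈ ℂ. In particular ‖a(r,z)‖ ≤ ‖a‖ exp(r² (Im z)²). -/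
open Complex MeasureTheory Filter Topology Set

noncomputable section

/-- The smeared element `a(r,z) = (r/√π) ∫ exp (-r²(t-z)²) α_t a dt`. -/
def smear {E : Type*} [NormedAddCommGroup E] [NormedSpace ℂ E]
    (α : ℝ → E →L[ℂ] E) (a : E) (r : ℝ) (z : ℂ) : E :=
  ((r / Real.sqrt Real.pi : ℝ) : ℂ) •
    ∫ t : ℝ, Complex.exp (-(r : ℂ) ^ 2 * ((t : ℂ) - z) ^ 2) • α t a

/-! For real `s`, the substitution `t ↦ t + s` in the Gaussian integral gives
`α_s (a(r,z)) = a(r, z + s)`, so `w ↦ a(r, z + w)` extends `s ↦ α_s (a(r,z))`. It is entire: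
on a ball `‖w‖ ≤ R` the complex Gaussian `exp (-r²(t-w)²)` is dominated by the real Gaussian
`exp (r²R²) exp (-r²t²/2)`, which allows differentiation under the integral sign. The norm
bound comes from `|exp (-r²(t-z)²)| = exp (r² (Im z)²) exp (-r²(t - Re z)²)` and
`∫ exp (-r²t²) dt = √π / r`. -/

section GaussTransform

variable {E : Type*} [NormedAddCommGroup E] [NormedSpace ℂ E]

lemma re_gaussian_exponent (r t : ℝ) (w : ℂ) :
    (-(r : ℂ) ^ 2 * ((t : ℂ) - w) ^ 2).re = r ^ 2 * w.im ^ 2 - r ^ 2 * (t - w.re) ^ 2 := by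
  simp only [sq, mul_re, mul_im, neg_re, neg_im, sub_re, sub_im, ofReal_re, ofReal_im]
  ring

lemma norm_cexp_gaussian (r t : ℝ) (w : ℂ) :
    ‖cexp (-(r : ℂ) ^ 2 * ((t : ℂ) - w) ^ 2)‖ =
      Real.exp (r ^ 2 * w.im ^ 2) * Real.exp (-r ^ 2 * (t - w.re) ^ 2) := by
  rw [norm_exp, re_gaussian_exponent, ← Real.exp_add]
  ring_nf

lemma norm_cexp_gaussian_le (r t : ℝ) (w : ℂ) :
    ‖cexp (-(r : ℂ) ^ 2 * ((t : ℂ) - w) ^ 2)‖ ≤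
      Real.exp (r ^ 2 * ‖w‖ ^ 2) * Real.exp (-(r ^ 2 / 2) * t ^ 2) := by
  rw [norm_exp, re_gaussian_exponent, ← Real.exp_add, Real.exp_le_exp, Complex.sq_norm,
    normSq_apply]
  -- `(t - x)² + x² - t²/2 = (t - 2x)²/2`
  nlinarith [mul_nonneg (sq_nonneg r) (sq_nonneg (t - 2 * w.re))]

lemma hasDerivAt_cexp_gaussian_smul (r t : ℝ) (v : E) (w : ℂ) :
    HasDerivAt (fun w : ℂ => cexp (-(r : ℂ) ^ 2 * ((t : ℂ) - w) ^ 2) • v)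
      ((2 * (r : ℂ) ^ 2 * ((t : ℂ) - w) * cexp (-(r : ℂ) ^ 2 * ((t : ℂ) - w) ^ 2)) • v)
      w := by
  have h : HasDerivAt (fun w : ℂ => -(r : ℂ) ^ 2 * ((t : ℂ) - w) ^ 2)
      (2 * (r : ℂ) ^ 2 * ((t : ℂ) - w)) w :=
    ((((hasDerivAt_id' w).const_sub (t : ℂ)).fun_pow 2).const_mul (-(r : ℂ) ^ 2)).congr_deriv
      (by ring)
  exact (h.cexp.smul_const v).congr_deriv (by rw [mul_comm])

lemma norm_gaussian_deriv_le (r t : ℝ) {w : ℂ} {R : ℝ} (hw : ‖w‖ ≤ R) :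
    ‖2 * (r : ℂ) ^ 2 * ((t : ℂ) - w) * cexp (-(r : ℂ) ^ 2 * ((t : ℂ) - w) ^ 2)‖ ≤
      2 * r ^ 2 * Real.exp (r ^ 2 * R ^ 2) * ((|t| + R) * Real.exp (-(r ^ 2 / 2) * t ^ 2)) := by
  have hR : 0 ≤ R := (norm_nonneg w).trans hw
  have hdist : ‖(t : ℂ) - w‖ ≤ |t| + R :=
    (norm_sub_le _ _).trans (by rw [norm_real, Real.norm_eq_abs]; linarith)
  have hexp : ‖cexp (-(r : ℂ) ^ 2 * ((t : ℂ) - w) ^ 2)‖ ≤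
      Real.exp (r ^ 2 * R ^ 2) * Real.exp (-(r ^ 2 / 2) * t ^ 2) :=
    (norm_cexp_gaussian_le r t w).trans (by gcongr)
  calc ‖2 * (r : ℂ) ^ 2 * ((t : ℂ) - w) * cexp (-(r : ℂ) ^ 2 * ((t : ℂ) - w) ^ 2)‖
      = 2 * r ^ 2 * ‖(t : ℂ) - w‖ * ‖cexp (-(r : ℂ) ^ 2 * ((t : ℂ) - w) ^ 2)‖ := by
        simp only [norm_mul, norm_pow, norm_real, Real.norm_eq_abs, sq_abs, Complex.norm_two]
    _ ≤ 2 * r ^ 2 * (|t| + R) * (Real.exp (r ^ 2 * R ^ 2) * Real.exp (-(r ^ 2 / 2) * t ^ 2)) := by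
        gcongr
    _ = 2 * r ^ 2 * Real.exp (r ^ 2 * R ^ 2) * ((|t| + R) * Real.exp (-(r ^ 2 / 2) * t ^ 2)) := by
        ring

def gaussTransform (r : ℝ) (f : ℝ → E) (w : ℂ) : E :=
  ∫ t : ℝ, cexp (-(r : ℂ) ^ 2 * ((t : ℂ) - w) ^ 2) • f t

variable {f : ℝ → E} {r M : ℝ}

lemma integrable_cexp_gaussian_smul (hr : 0 < r) (hf : AEStronglyMeasurable f)
    (hM : ∀ t, ‖f t‖ ≤ M) (w : ℂ) :
    Integrable fun t : ℝ => cexp (-(r : ℂ) ^ 2 * ((t : ℂ) - w) ^ 2) • f t := by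
  refine Integrable.mono'
    (((integrable_exp_neg_mul_sq (by positivity : 0 < r ^ 2 / 2)).const_mul
      (Real.exp (r ^ 2 * ‖w‖ ^ 2))).mul_const M)
    ((Continuous.aestronglyMeasurable (by fun_prop)).smul hf) (Eventually.of_forall fun t => ?_)
  rw [norm_smul]
  exact mul_le_mul (norm_cexp_gaussian_le r t w) (hM t) (norm_nonneg _) (by positivity)

lemma differentiable_gaussTransform (hr : 0 < r) (hf : AEStronglyMeasurable f)
    (hM : ∀ t, ‖f t‖ ≤ M) : Differentiable ℂ (gaussTransform r f) := by
  intro w₀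
  set R := ‖w₀‖ + 1
  have hball : ∀ w ∈ Metric.ball w₀ 1, ‖w‖ ≤ R := fun w hw =>
    (norm_le_norm_add_norm_sub' w w₀).trans (by rw [mem_ball_iff_norm] at hw; linarith)
  have hb : 0 < r ^ 2 / 2 := by positivity
  have hbound : Integrable fun t : ℝ =>
      2 * r ^ 2 * Real.exp (r ^ 2 * R ^ 2) * ((|t| + R) * Real.exp (-(r ^ 2 / 2) * t ^ 2)) * M := by
    refine (((integrable_mul_exp_neg_mul_sq hb).norm.add
      ((integrable_exp_neg_mul_sq hb).const_mul R)).const_mul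
        (2 * r ^ 2 * Real.exp (r ^ 2 * R ^ 2))).mul_const M |>.congr
      (Eventually.of_forall fun t => ?_)
    simp only [Pi.add_apply, norm_mul, Real.norm_eq_abs, abs_of_pos (Real.exp_pos _)]
    ring
  refine (hasDerivAt_integral_of_dominated_loc_of_deriv_le (Metric.ball_mem_nhds w₀ one_pos)
    (Eventually.of_forall fun w => (integrable_cexp_gaussian_smul hr hf hM w).aestronglyMeasurable)
    (integrable_cexp_gaussian_smul hr hf hM w₀)
    ((Continuous.aestronglyMeasurable (by fun_prop)).smul hf)
    (Eventually.of_forall fun t w hw => ?_) hbound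
    (Eventually.of_forall fun t w _ =>
      hasDerivAt_cexp_gaussian_smul r t (f t) w)).2.differentiableAt
  rw [norm_smul]
  exact mul_le_mul (norm_gaussian_deriv_le r t (hball w hw)) (hM t) (norm_nonneg _)
    (by positivity)

lemma norm_gaussTransform_le (hr : 0 < r) (hM : ∀ t, ‖f t‖ ≤ M) (w : ℂ) :
    ‖gaussTransform r f w‖ ≤ M * Real.exp (r ^ 2 * w.im ^ 2) * (√Real.pi / r) := by
  have hgauss : ∫ t : ℝ, Real.exp (-r ^ 2 * (t - w.re) ^ 2) = √Real.pi / r := by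
    rw [integral_sub_right_eq_self (fun t => Real.exp (-r ^ 2 * t ^ 2)), integral_gaussian,
      Real.sqrt_div' _ (sq_nonneg r), Real.sqrt_sq hr.le]
  calc ‖gaussTransform r f w‖
      ≤ ∫ t : ℝ, M * (Real.exp (r ^ 2 * w.im ^ 2) * Real.exp (-r ^ 2 * (t - w.re) ^ 2)) := by
        refine norm_integral_le_of_norm_le
          ((((integrable_exp_neg_mul_sq (by positivity)).comp_sub_right w.re).const_mul _).const_mul
            M) (Eventually.of_forall fun t => ?_)
        rw [norm_smul, norm_cexp_gaussian, mul_comm]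
        gcongr
        exact hM t
    _ = M * Real.exp (r ^ 2 * w.im ^ 2) * (√Real.pi / r) := by
        rw [integral_const_mul, integral_const_mul, hgauss, mul_assoc]

lemma gaussTransform_comp_add_right (r : ℝ) (f : ℝ → E) (z : ℂ) (s : ℝ) :
    gaussTransform r (fun t => f (t + s)) z = gaussTransform r f (z + s) := by
  rw [gaussTransform, gaussTransform, ← integral_add_right_eq_self
    (fun t : ℝ => cexp (-(r : ℂ) ^ 2 * ((t : ℂ) - (z + s)) ^ 2) • f t) s]
  congr 1 with t
  push_cast
  ring_nf

lemma ContinuousLinearMap.map_gaussTransform [CompleteSpace E] {F : Type*} [NormedAddCommGroup F]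
    [NormedSpace ℂ F] [CompleteSpace F] (L : E →L[ℂ] F) {w : ℂ}
    (hint : Integrable fun t : ℝ => cexp (-(r : ℂ) ^ 2 * ((t : ℂ) - w) ^ 2) • f t) :
    L (gaussTransform r f w) = gaussTransform r (fun t => L (f t)) w := by
  rw [gaussTransform, ← L.integral_comp_comm hint]
  simp only [map_smul, gaussTransform]

end GaussTransform

lemma smear_eq_smul_gaussTransform {E : Type*} [NormedAddCommGroup E] [NormedSpace ℂ E]
    (α : ℝ → E →L[ℂ] E) (a : E) (r : ℝ) (z : ℂ) :
    smear α a r z = ((r / √Real.pi : ℝ) : ℂ) • gaussTransform r (fun t => α t a) z :=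
  rfl

namespace IsOneParamRep

variable {E : Type*} [NormedAddCommGroup E] [NormedSpace ℂ E] {α : ℝ → E →L[ℂ] E}
  {r : ℝ}

lemma norm_apply_le_s7 (hα : IsOneParamRep α) (t : ℝ) (a : E) : ‖α t a‖ ≤ ‖a‖ := by
  simpa using (α t).le_of_opNorm_le (hα.norm_le t) a

lemma apply_apply (hα : IsOneParamRep α) (s t : ℝ) (a : E) : α s (α t a) = α (t + s) a := by
  rw [add_comm, hα.map_add]
  rfl

lemma apply_smear [CompleteSpace E] (hα : IsOneParamRep α) (a : E) (hr : 0 < r) (z : ℂ)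
    (s : ℝ) : α s (smear α a r z) = smear α a r (z + s) := by
  rw [smear_eq_smul_gaussTransform, smear_eq_smul_gaussTransform, map_smul,
    (α s).map_gaussTransform (integrable_cexp_gaussian_smul hr
      (hα.strong_cont a).aestronglyMeasurable (hα.norm_apply_le_s7 · a) z),
    ← gaussTransform_comp_add_right]
  simp only [hα.apply_apply]

lemma differentiable_smear (hα : IsOneParamRep α) (a : E) (hr : 0 < r) :
    Differentiable ℂ (smear α a r) :=
  (differentiable_gaussTransform hr (hα.strong_cont a).aestronglyMeasurable
    (hα.norm_apply_le_s7 · a)).const_smul _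

lemma norm_smear_le (hα : IsOneParamRep α) (a : E) (hr : 0 < r) (z : ℂ) :
    ‖smear α a r z‖ ≤ ‖a‖ * Real.exp (r ^ 2 * z.im ^ 2) := by
  have hπ : 0 < √Real.pi := Real.sqrt_pos.mpr Real.pi_pos
  rw [smear_eq_smul_gaussTransform, norm_smul, norm_real, Real.norm_of_nonneg (by positivity)]
  calc r / √Real.pi * ‖gaussTransform r (fun t => α t a) z‖
      ≤ r / √Real.pi * (‖a‖ * Real.exp (r ^ 2 * z.im ^ 2) * (√Real.pi / r)) := by
        gcongr
        exact norm_gaussTransform_le hr (hα.norm_apply_le_s7 · a) z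
    _ = ‖a‖ * Real.exp (r ^ 2 * z.im ^ 2) := by
        field_simp

end IsOneParamRep

/-- The smeared element `a(r,z)` is entire analytic for `α`, with
`α_y (a(r,z)) = a(r, z+y)` for all `y ∈ ℂ`, and `‖a(r,z)‖ ≤ ‖a‖ exp (r² (Im z)²)`. -/
theorem smear_analytic
    {E : Type*} [NormedAddCommGroup E] [NormedSpace ℂ E] [CompleteSpace E]
    {α : ℝ → E →L[ℂ] E} (hα : IsOneParamRep α) (a : E) {r : ℝ} (hr : 0 < r) (z : ℂ) :
    (∀ y : ℂ, HasContVal α y (smear α a r z) (smear α a r (z + y))) ∧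
    ‖smear α a r z‖ ≤ ‖a‖ * Real.exp (r ^ 2 * z.im ^ 2) := by
  have hdiff : Differentiable ℂ fun w => smear α a r (z + w) :=
    (hα.differentiable_smear a hr).comp (differentiable_id.const_add z)
  refine ⟨fun y => ⟨fun w => smear α a r (z + w), hdiff.continuous.continuousOn,
    hdiff.differentiableOn, fun t => (hα.apply_smear a hr z t).symm, rfl⟩,
    hα.norm_smear_le a hr z⟩
end
end

section
/- Let u be a strongly continuous one-parameter group of unitaries on a Hilbert space H (or, more generally, a Hilbert C*-module E), and let z ∈ iℝ be purely imaginary. Then the analytic continuation u_z is symmetric: for all a, b ∈ D(u_z), ⟨u_z(a), b⟩ = ⟨a, u_z(b)⟩, i.e. u_z ⊆ (u_z)*. -/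
open Complex MeasureTheory Filter Topology Set

noncomputable section

/-!
The function `k w = ⟪g (-conj w), a⟫ - ⟪b, f w⟫`, built from the continuations `f` of `t ↦ u t a`
and `g` of `t ↦ u t b`, is continuous on the strip `S(z)` and holomorphic inside (`-conj` preserves
the strip, and the conjugate-linearity of the inner product in its first slot undoes the
antiholomorphic reparametrisation). It vanishes on `ℝ` because `⟪u (-t) b, a⟫ = ⟪b, u t a⟫`.
Such a function vanishes on the whole strip: Schwarz reflection across `ℝ`, holomorphic across the
axis by Morera's theorem, extends it to a symmetric open strip where the identity theorem applies.
As `-conj z = z` for purely imaginary `z`, evaluating `k` at `z` gives `⟪b', a⟫ = ⟪b, a'⟫`.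
-/

open ComplexConjugate
open scoped InnerProductSpace Interval

namespace Complex

variable {E : Type*} [NormedAddCommGroup E] [NormedSpace ℂ E] {f : ℂ → E} {z w : ℂ}

lemma wedgeIntegral_add_wedgeIntegral_eq_zero_of_zero_notMem_Ioo
    (hc : ContinuousOn f (Rectangle z w))
    (hd : ∀ p ∈ Rectangle z w, p.im ≠ 0 → DifferentiableAt ℂ f p)
    (h0 : (0 : ℝ) ∉ Ioo (min z.im w.im) (max z.im w.im)) :
    wedgeIntegral z w f + wedgeIntegral w z f = 0 := by
  rw [wedgeIntegral_add_wedgeIntegral_eq]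
  refine integral_boundary_rect_eq_zero_of_continuousOn_of_differentiableOn f z w hc
    fun p hp => (hd p ⟨Ioo_subset_Icc_self hp.1, Ioo_subset_Icc_self hp.2⟩
      fun hp0 => h0 (hp0 ▸ hp.2)).differentiableWithinAt

lemma wedgeIntegral_add_wedgeIntegral_eq_add_of_mem_uIcc (hc : ContinuousOn f (Rectangle z w))
    {y : ℝ} (hy : y ∈ [[z.im, w.im]]) :
    wedgeIntegral z w f + wedgeIntegral w z f =
      (wedgeIntegral z (w.re + y * I) f + wedgeIntegral (w.re + y * I) z f) +
        (wedgeIntegral (z.re + y * I) w f + wedgeIntegral w (z.re + y * I) f) := by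
  have vertical : ∀ x ∈ [[z.re, w.re]], ∀ y₁ ∈ [[z.im, w.im]], ∀ y₂ ∈ [[z.im, w.im]],
      IntervalIntegrable (fun t : ℝ => f (↑x + ↑t * I)) volume y₁ y₂ := by
    intro x hx y₁ hy₁ y₂ hy₂
    refine (hc.comp (by fun_prop) fun t ht => ?_).intervalIntegrable
    simpa [Rectangle, mem_reProdIm] using ⟨hx, uIcc_subset_uIcc hy₁ hy₂ ht⟩
  simp only [wedgeIntegral_add_wedgeIntegral_eq, add_re, add_im, ofReal_re, ofReal_im, mul_re,
    mul_im, I_re, I_im, mul_zero, mul_one, sub_zero, zero_add, add_zero]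
  rw [← intervalIntegral.integral_add_adjacent_intervals
      (vertical _ right_mem_uIcc _ left_mem_uIcc _ hy)
      (vertical _ right_mem_uIcc _ hy _ right_mem_uIcc),
    ← intervalIntegral.integral_add_adjacent_intervals
      (vertical _ left_mem_uIcc _ left_mem_uIcc _ hy)
      (vertical _ left_mem_uIcc _ hy _ right_mem_uIcc)]
  simp only [smul_add]
  abel

lemma wedgeIntegral_add_wedgeIntegral_eq_zero_of_differentiableAt_of_im_ne_zero
    (hc : ContinuousOn f (Rectangle z w))
    (hd : ∀ p ∈ Rectangle z w, p.im ≠ 0 → DifferentiableAt ℂ f p) :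
    wedgeIntegral z w f + wedgeIntegral w z f = 0 := by
  by_cases h0 : (0 : ℝ) ∈ Ioo (min z.im w.im) (max z.im w.im)
  · have h0' : (0 : ℝ) ∈ [[z.im, w.im]] := Ioo_subset_Icc_self h0
    have piece : ∀ z' w' : ℂ, Rectangle z' w' ⊆ Rectangle z w → (z'.im = 0 ∨ w'.im = 0) →
        wedgeIntegral z' w' f + wedgeIntegral w' z' f = 0 := by
      refine fun z' w' hsub hzero => wedgeIntegral_add_wedgeIntegral_eq_zero_of_zero_notMem_Ioo
        (hc.mono hsub) (fun p hp => hd p (hsub hp)) fun h => ?_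
      rcases hzero with hzero | hzero <;>
        simp only [hzero, mem_Ioo, min_lt_iff, lt_max_iff] at h <;> grind
    rw [wedgeIntegral_add_wedgeIntegral_eq_add_of_mem_uIcc hc h0', piece, piece, add_zero]
    · refine reProdIm_subset_iff.2 (prod_mono ?_ ?_) <;> simp [uIcc_subset_uIcc_right, h0']
    · simp
    · refine reProdIm_subset_iff.2 (prod_mono ?_ ?_) <;> simp [uIcc_subset_uIcc_left, h0']
    · simp
  · exact wedgeIntegral_add_wedgeIntegral_eq_zero_of_zero_notMem_Ioo hc hd h0

theorem differentiableOn_of_continuousOn_of_differentiableAt_im_ne_zero [CompleteSpace E]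
    {U : Set ℂ} (hU : IsOpen U) (hc : ContinuousOn f U)
    (hd : ∀ p ∈ U, p.im ≠ 0 → DifferentiableAt ℂ f p) : DifferentiableOn ℂ f U :=
  (isConservativeOn_and_continuousOn_iff_isDifferentiableOn hU).1
    ⟨fun _ _ hsub => eq_neg_of_add_eq_zero_left <|
      wedgeIntegral_add_wedgeIntegral_eq_zero_of_differentiableAt_of_im_ne_zero (hc.mono hsub)
        fun p hp => hd p (hsub hp), hc⟩

def schwarzReflection (g : ℂ → ℂ) (w : ℂ) : ℂ :=
  if 0 ≤ w.im then g w else conj (g (conj w))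

theorem differentiableOn_schwarzReflection {g : ℂ → ℂ} {U : Set ℂ} (hU : IsOpen U)
    (hU_conj : ∀ w ∈ U, conj w ∈ U) (hc : ContinuousOn g (U ∩ {w | 0 ≤ w.im}))
    (hd : DifferentiableOn ℂ g (U ∩ {w | 0 < w.im}))
    (hreal : ∀ x : ℝ, (x : ℂ) ∈ U → conj (g x) = g x) :
    DifferentiableOn ℂ (schwarzReflection g) U := by
  have upper_open : IsOpen (U ∩ {w | 0 < w.im}) :=
    hU.inter (isOpen_lt continuous_const continuous_im)
  have lower_open : IsOpen (U ∩ {w | w.im < 0}) :=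
    hU.inter (isOpen_lt continuous_im continuous_const)
  refine differentiableOn_of_continuousOn_of_differentiableAt_im_ne_zero hU ?_ fun p hp hp0 => ?_
  · refine ContinuousOn.if (fun p ⟨hpU, hp⟩ => ?_) (hc.mono ?_) ?_
    · rw [frontier_setOfPred_le_im] at hp
      have hp_real : p = (p.re : ℂ) := ext rfl (by simpa using hp)
      rw [hp_real, conj_ofReal, hreal _ (hp_real ▸ hpU)]
    · simp [(isClosed_le continuous_const continuous_im).closure_eq]
    · simp only [not_le, closure_setOfPred_im_lt]
      refine continuous_conj.comp_continuousOn (hc.comp continuous_conj.continuousOn ?_)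
      exact fun w ⟨hwU, hw⟩ => ⟨hU_conj w hwU, by simpa using hw⟩
  rcases hp0.lt_or_gt with hneg | hpos
  · have hconj : conj p ∈ U ∩ {w | 0 < w.im} := ⟨hU_conj p hp, by simpa using hneg⟩
    have := (hd.differentiableAt (upper_open.mem_nhds hconj)).conj_conj
    rw [conj_conj] at this
    refine this.congr_of_eventuallyEq ?_
    filter_upwards [lower_open.mem_nhds ⟨hp, hneg⟩] with w hw
    simp [schwarzReflection, not_le.2 (show w.im < 0 from hw.2)]
  · refine (hd.differentiableAt (upper_open.mem_nhds ⟨hp, hpos⟩)).congr_of_eventuallyEq ?_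
    filter_upwards [upper_open.mem_nhds ⟨hp, hpos⟩] with w hw
    simp [schwarzReflection, (show 0 < w.im from hw.2).le]

theorem frequently_ofReal_nhdsNE_zero {p : ℂ → Prop} (hp : ∀ t : ℝ, p t) :
    ∃ᶠ w in 𝓝[≠] (0 : ℂ), p w := by
  have : Tendsto ((↑) : ℝ → ℂ) (𝓝[≠] 0) (𝓝[≠] 0) :=
    tendsto_nhdsWithin_of_tendsto_nhds_of_eventually_within _
      ((continuous_ofReal.tendsto' 0 0 ofReal_zero).mono_left nhdsWithin_le_nhds)
      (eventually_nhdsWithin_of_forall fun _ ht => ofReal_ne_zero.2 ht)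
  exact this.frequently (Frequently.of_forall hp)

theorem eqOn_zero_of_forall_ofReal_eq_zero {k : ℂ → ℂ} {c : ℝ} (hc0 : 0 < c)
    (hc : ContinuousOn k (im ⁻¹' Icc 0 c)) (hd : DifferentiableOn ℂ k (im ⁻¹' Ioo 0 c))
    (h0 : ∀ t : ℝ, k t = 0) : EqOn k 0 (im ⁻¹' Icc 0 c) := by
  set U : Set ℂ := im ⁻¹' Ioo (-c) c
  have hU : IsOpen U := isOpen_Ioo.preimage continuous_im
  have hK : AnalyticOnNhd ℂ (schwarzReflection k) U := by
    refine (differentiableOn_schwarzReflection hU (fun w hw => ?_) (hc.mono ?_) (hd.mono ?_)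
      fun x _ => by simp [h0]).analyticOnNhd hU
    · simpa [U, and_comm, neg_lt] using hw
    · exact fun w hw => ⟨hw.2, hw.1.2.le⟩
    · exact fun w hw => ⟨hw.2, hw.1.2⟩
  have hK_zero : EqOn (schwarzReflection k) 0 U :=
    hK.eqOn_zero_of_preconnected_of_frequently_eq_zero
      ((convex_Ioo (-c) c).linear_preimage imLm).isPreconnected (by simp [U, hc0])
      (frequently_ofReal_nhdsNE_zero fun t => by simp [schwarzReflection, h0])
  refine EqOn.of_subset_closure (s := im ⁻¹' Ico 0 c) (fun w hw => ?_) hc continuousOn_const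
    (preimage_mono Ico_subset_Icc_self) ?_
  · simpa [schwarzReflection, hw.1] using hK_zero (show w ∈ U from ⟨by linarith [hw.1], hw.2⟩)
  · rw [closure_preimage_im, closure_Ico hc0.ne]

end Complex

theorem hStrip_eq_preimage_im (z : ℂ) : hStrip z = im ⁻¹' uIcc 0 z.im := rfl

theorem eq_zero_of_forall_ofReal_eq_zero_of_hStrip {k : ℂ → ℂ} {z : ℂ}
    (hc : ContinuousOn k (hStrip z)) (hd : DifferentiableOn ℂ k (interior (hStrip z)))
    (h0 : ∀ t : ℝ, k t = 0) : k z = 0 := by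
  rw [hStrip_eq_preimage_im] at hc hd
  rw [interior_preimage_im] at hd
  rcases lt_trichotomy z.im 0 with hneg | hzero | hpos
  · rw [uIcc_of_ge hneg.le] at hc hd
    rw [interior_Icc] at hd
    have hneg_strip := Complex.eqOn_zero_of_forall_ofReal_eq_zero (k := fun w => k (-w))
      (neg_pos.2 hneg)
      (hc.comp continuous_neg.continuousOn fun w hw => ?_)
      (hd.comp differentiable_neg.differentiableOn fun w hw => ?_) fun t => by simpa using h0 (-t)
    · simpa using hneg_strip (show -z ∈ im ⁻¹' Icc 0 (-z.im) by simp [hneg.le])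
    · simp only [mem_preimage, mem_Icc, neg_im] at hw ⊢
      constructor <;> linarith
    · simp only [mem_preimage, mem_Ioo, neg_im] at hw ⊢
      constructor <;> linarith
  · rw [show z = (z.re : ℂ) from Complex.ext rfl (by simpa using hzero)]
    exact h0 _
  · rw [uIcc_of_le hpos.le] at hc hd
    rw [interior_Icc] at hd
    exact Complex.eqOn_zero_of_forall_ofReal_eq_zero hpos hc hd h0 ⟨hpos.le, le_rfl⟩

theorem IsOneParamRep.apply_apply_neg {E : Type*} [NormedAddCommGroup E] [NormedSpace ℂ E]
    {α : ℝ → E →L[ℂ] E} (hα : IsOneParamRep α) (t : ℝ) (x : E) : α t (α (-t) x) = x := by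
  rw [← ContinuousLinearMap.comp_apply, ← hα.map_add, add_neg_cancel, hα.map_zero,
    ContinuousLinearMap.id_apply]

theorem neg_conj_mem_hStrip {z w : ℂ} (hw : w ∈ hStrip z) : -conj w ∈ hStrip z := by
  simpa [hStrip] using hw

theorem neg_conj_mem_interior_hStrip {z w : ℂ} (hw : w ∈ interior (hStrip z)) :
    -conj w ∈ interior (hStrip z) := by
  simpa [hStrip_eq_preimage_im, interior_preimage_im] using hw

theorem DifferentiableAt.inner_neg_conj {H : Type*} [NormedAddCommGroup H] [InnerProductSpace ℂ H]
    {g : ℂ → H} {w : ℂ} (hg : DifferentiableAt ℂ g (-conj w)) (a : H) :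
    DifferentiableAt ℂ (fun v => ⟪g (-conj v), a⟫_ℂ) w := by
  have hg' : DifferentiableAt ℂ (fun v => ⟪a, g (-v)⟫_ℂ) (conj w) :=
    (innerSL ℂ a).differentiableAt.comp _ (hg.comp _ differentiableAt_id.neg)
  simpa [Function.comp_def, inner_conj_symm] using hg'.conj_conj

theorem unitary_cont_symmetric_general
    {H : Type*} [NormedAddCommGroup H] [InnerProductSpace ℂ H]
    (u : ℝ → H →L[ℂ] H) (hu : IsOneParamRep u)
    (huni : ∀ (t : ℝ) (x y : H), (inner ℂ (u t x) (u t y) : ℂ) = inner ℂ x y)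
    (z : ℂ) (hz : z.re = 0) (a b a' b' : H)
    (ha : HasContVal u z a a') (hb : HasContVal u z b b') :
    (inner ℂ a' b : ℂ) = inner ℂ a b' := by
  obtain ⟨f, hfc, hfd, hfr, rfl⟩ := ha
  obtain ⟨g, hgc, hgd, hgr, rfl⟩ := hb
  set k : ℂ → ℂ := fun w => ⟪g (-conj w), a⟫_ℂ - ⟪b, f w⟫_ℂ with hk_def
  have k_cont : ContinuousOn k (hStrip z) :=
    ((hgc.comp (by fun_prop) fun _ => neg_conj_mem_hStrip).inner continuousOn_const).sub
      (continuousOn_const.inner hfc)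
  have k_diff : DifferentiableOn ℂ k (interior (hStrip z)) := fun w hw =>
    have hg := hgd.differentiableAt (isOpen_interior.mem_nhds (neg_conj_mem_interior_hStrip hw))
    have hf := hfd.differentiableAt (isOpen_interior.mem_nhds hw)
    ((hg.inner_neg_conj a).sub ((innerSL ℂ b).differentiableAt.comp w hf)).differentiableWithinAt
  have k_real (t : ℝ) : k t = 0 := by
    simp only [hk_def]
    rw [show -conj (t : ℂ) = ((-t : ℝ) : ℂ) by simp, hgr, hfr, sub_eq_zero, ← huni t,
      hu.apply_apply_neg]
  have hz_fixed : -conj z = z := by simp [Complex.ext_iff, hz]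
  have hkz : ⟪g z, a⟫_ℂ = ⟪b, f z⟫_ℂ := by
    simpa only [hk_def, hz_fixed, sub_eq_zero] using
      eq_zero_of_forall_ofReal_eq_zero_of_hStrip k_cont k_diff k_real
  rw [← inner_conj_symm, ← inner_conj_symm a, ← hkz]

/-- For a strongly continuous one-parameter unitary group `u` on a Hilbert space and a purely
imaginary `z`, the analytic continuation `u_z` is symmetric:
`⟨u_z a, b⟩ = ⟨a, u_z b⟩` for all `a, b ∈ D(u_z)`, i.e. `u_z ⊆ (u_z)*`. -/
theorem unitary_cont_symmetric
    {H : Type*} [NormedAddCommGroup H] [InnerProductSpace ℂ H] [CompleteSpace H]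
    (u : ℝ → H →L[ℂ] H) (hu : IsOneParamRep u)
    (huni : ∀ (t : ℝ) (x y : H), (inner ℂ (u t x) (u t y) : ℂ) = inner ℂ x y)
    (z : ℂ) (hz : z.re = 0) (a b a' b' : H)
    (ha : HasContVal u z a a') (hb : HasContVal u z b b') :
    (inner ℂ a' b : ℂ) = inner ℂ a b' :=
  unitary_cont_symmetric_general u hu huni z hz a b a' b' ha hb
end
end
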